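/- arXiv:math-ph/0503071 — 3 statements merged into one kernel-verified Lean document; each statement's English description precedes it below -/
import Mathlib

section
/- Let P be a shift-invariant probability measure on A^ℤ satisfying the exponential approximation of hitting times with constants C, c, ρ₁, ρ₂ > 0 as in the Key Lemma. Let W⁺ₙ(ω, ω′) := T_{ω₁ⁿ}(ω′) be the waiting time of the first n symbols of ω in an independent copy ω′. Then for every α₁ with α₁ρ₁ > 1, eventually (P×P)-almost surely, log(W⁺ₙ(ω,ω′) · P([ω₁ⁿ])) ≤ log log n^{α₁}. -/
open MeasureTheory Filter Finset

def shift {A : Type*} (ω : ℤ → A) : ℤ → A := fun k => ω (k + 1)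

def cylinder {A : Type*} {n : ℕ} (x : Fin n → A) : Set (ℤ → A) :=
  {ω | ∀ i : Fin n, ω i = x i}

def blockOf {A : Type*} (n : ℕ) (ω : ℤ → A) : Fin n → A := fun i => ω i

noncomputable def hitTime {A : Type*} {n : ℕ} (x : Fin n → A) (ω : ℤ → A) : ℕ :=
  sInf {k : ℕ | 1 ≤ k ∧ shift^[k] ω ∈ cylinder x}

/-- The waiting time `W⁺ₙ(ω,ω') = T_{ω₁ⁿ}(ω')` of the first `n` symbols of `ω` in
the independent trajectory `ω'`. -/
noncomputable def waitTime {A : Type*} (n : ℕ) (ω ω' : ℤ → A) : ℕ :=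
  hitTime (blockOf n ω) ω'

/-! By Borel–Cantelli it suffices that `P × P (W⁺ₙ P([ω₁ⁿ]) > α₁ log n)` is summable in `n`.
Splitting according to the first block `a = ω₁ⁿ` and using independence, this probability is
`∑ₐ P([a]) P(T_a P([a]) > α₁ log n) ≤ (1 + C) n^{-α₁ ρ₁}`, summable as `α₁ ρ₁ > 1`.
The splitting needs the cylinders to be measurable; the hypothesis indeed forces the σ-algebra
on `A` to separate points. -/

open Real
open scoped ENNReal Topology

section Shift

variable {A : Type*}

lemma shift_iterate_apply (k : ℕ) (ω : ℤ → A) (i : ℤ) : shift^[k] ω i = ω (i + k) := by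
  induction k generalizing ω with
  | zero => simp
  | succ k ih =>
    rw [Function.iterate_succ_apply, ih]
    simp only [shift, Nat.cast_succ, add_assoc]

lemma shift_iterate_mem_cylinder {n : ℕ} {a : Fin n → A} {ω : ℤ → A} {k : ℕ} :
    shift^[k] ω ∈ cylinder a ↔ ∀ i : Fin n, ω (i + k) = a i := by
  simp only [_root_.cylinder, Set.mem_ofPred_eq, shift_iterate_apply]

lemma hitTime_eq_of_isLeast {n : ℕ} {a : Fin n → A} {ω : ℤ → A} {k : ℕ}
    (h : IsLeast {k | 1 ≤ k ∧ shift^[k] ω ∈ cylinder a} k) : hitTime a ω = k :=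
  h.csInf_eq

lemma blockOf_preimage_singleton (n : ℕ) (a : Fin n → A) : blockOf n ⁻¹' {a} = cylinder a := by
  ext ω
  simp [_root_.cylinder, blockOf, funext_iff]

end Shift

lemma mem_iff_of_mem_measurableAtom {X : Type*} [MeasurableSpace X] {x y : X}
    (h : y ∈ measurableAtom x) {s : Set X} (hs : MeasurableSet s) : y ∈ s ↔ x ∈ s :=
  ⟨fun hy => mem_of_mem_measurableAtom
      (measurableAtom_eq_of_mem h ▸ mem_measurableAtom_self x) hs hy,
    mem_of_mem_measurableAtom h hs⟩

lemma mem_measurableAtom_pi {ι X : Type*} [MeasurableSpace X] {ω ω' : ι → X}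
    (h : ∀ i, ω' i ∈ measurableAtom (ω i)) : ω' ∈ measurableAtom ω := by
  classical
  -- `g` maps `ω` to `ω'` moving each coordinate within its atom, hence fixes measurable sets
  let g : (ι → X) → (ι → X) := fun ζ i => if ζ i = ω i then ω' i else ζ i
  have hg : ∀ H : Set (ι → X), MeasurableSet H → g ⁻¹' H = H := by
    suffices MeasurableSpace.pi ≤ MeasurableSpace.invariants g from fun H hH => (this H hH).2
    refine iSup_le fun i => ?_
    rintro _ ⟨s, hs, rfl⟩
    refine ⟨measurable_pi_apply i hs, ?_⟩
    ext ζ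
    by_cases hζ : ζ i = ω i
    · simp [g, hζ, mem_iff_of_mem_measurableAtom (h i) hs]
    · simp [g, hζ]
  simp only [measurableAtom, Set.mem_iInter]
  intro H hωH hH
  have hgω : g ω = ω' := funext fun i => if_pos rfl
  rw [← hgω, ← Set.mem_preimage, hg H hH]
  exact hωH

section HittingTimes

variable {A : Type*} [MeasurableSpace A]

lemma exists_mem_measurableAtom_hitTime_eq {x y : A} (hy : y ∈ measurableAtom x) (hyx : y ≠ x)
    {n : ℕ} (hn : 0 < n) {K : ℕ} (hK : 1 ≤ K) {ω : ℤ → A}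
    (hω : ∀ j : Fin n, ω (j + K) ∈ measurableAtom x) :
    ∃ ω' ∈ measurableAtom ω, hitTime (fun _ : Fin n => x) ω' = K := by
  classical
  let ω' : ℤ → A := fun i =>
    if ∃ j : Fin n, i = j + K then x else if ω i ∈ measurableAtom x then y else ω i
  have hω'x : ∀ i, ω' i = x ↔ ∃ j : Fin n, i = j + K := by
    intro i
    by_cases hi : ∃ j : Fin n, i = j + K
    · simp [ω', hi]
    · by_cases hωi : ω i ∈ measurableAtom x
      · simp [ω', hi, hωi, hyx]
      · simp only [ω', hi, hωi, if_false, iff_false]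
        rintro rfl
        exact hωi (mem_measurableAtom_self _)
  refine ⟨ω', mem_measurableAtom_pi fun i => ?_, hitTime_eq_of_isLeast ⟨⟨hK, ?_⟩, ?_⟩⟩
  · by_cases hi : ∃ j : Fin n, i = j + K
    · obtain ⟨j, rfl⟩ := hi
      simp [ω', measurableAtom_eq_of_mem (hω j)]
    · by_cases hωi : ω i ∈ measurableAtom x
      · simp [ω', hi, hωi, measurableAtom_eq_of_mem hωi, hy]
      · simp [ω', hi, hωi]
  · exact shift_iterate_mem_cylinder.2 fun j => (hω'x _).2 ⟨j, rfl⟩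
  · rintro k ⟨-, hk⟩
    obtain ⟨j, hj⟩ := (hω'x _).1 (shift_iterate_mem_cylinder.1 hk ⟨0, hn⟩)
    simp only [Nat.cast_zero, zero_add] at hj
    omega

def hitTail (P : Measure (ℤ → A)) {n : ℕ} (a : Fin n → A) (t : ℝ) : Set (ℤ → A) :=
  {ω | (hitTime a ω : ℝ) * (P (cylinder a)).toReal > t}

def HasExpHittingApprox (P : Measure (ℤ → A)) (C c ρ₁ ρ₂ : ℝ) : Prop :=
  ∀ (n : ℕ) (a : Fin n → A), ∃ ρ ∈ Set.Icc ρ₁ ρ₂, ∀ t : ℝ, 0 < t →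
    |(P (hitTail P a t)).toReal - exp (-ρ * t)| ≤ C * exp (-c * n) * exp (-ρ * t)

lemma measure_cylinder_le_measure_hitTime_eq [Countable A] {P : Measure (ℤ → A)}
    (hinv : MeasurePreserving shift P P) {x y : A} (hy : y ∈ measurableAtom x) (hyx : y ≠ x)
    {n : ℕ} (hn : 0 < n) {K : ℕ} (hK : 1 ≤ K) :
    P (cylinder fun _ : Fin n => x) ≤ P {ω | hitTime (fun _ : Fin n => x) ω = K} := by
  let E : Set (ℤ → A) := ⋂ j : Fin n, (fun ζ => ζ j) ⁻¹' measurableAtom x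
  have hE : MeasurableSet E :=
    .iInter fun j => measurable_pi_apply _ (.measurableAtom_of_countable x)
  have hET : shift^[K] ⁻¹' E ⊆ toMeasurable P {ω | hitTime (fun _ : Fin n => x) ω = K} := by
    intro ω hω
    simp only [E, Set.mem_preimage, Set.mem_iInter, shift_iterate_apply] at hω
    obtain ⟨ω', hω', hhit⟩ := exists_mem_measurableAtom_hitTime_eq hy hyx hn hK hω
    exact (mem_iff_of_mem_measurableAtom hω' (measurableSet_toMeasurable _ _)).1
      (subset_toMeasurable _ _ hhit)
  calc P (cylinder fun _ : Fin n => x)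
      ≤ P E := measure_mono fun ω hω => Set.mem_iInter.2 fun j => by
        simp only [Set.mem_preimage, hω j, mem_measurableAtom_self]
    _ = P (shift^[K] ⁻¹' E) := ((hinv.iterate K).measure_preimage hE.nullMeasurableSet).symm
    _ ≤ P {ω | hitTime (fun _ : Fin n => x) ω = K} :=
        (measure_mono hET).trans_eq (measure_toMeasurable _)

lemma measure_cylinder_le_measure_hitTail [Countable A] {P : Measure (ℤ → A)} [IsFiniteMeasure P]
    (hinv : MeasurePreserving shift P P) {x y : A} (hy : y ∈ measurableAtom x) (hyx : y ≠ x)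
    {n : ℕ} (hn : 0 < n) (t : ℝ) :
    P (cylinder fun _ : Fin n => x) ≤ P (hitTail P (fun _ : Fin n => x) t) := by
  set p := (P (cylinder fun _ : Fin n => x)).toReal
  rcases eq_or_ne (P (cylinder fun _ : Fin n => x)) 0 with h0 | h0
  · simp [h0]
  have hp : 0 < p := ENNReal.toReal_pos h0 (measure_ne_top _ _)
  obtain ⟨K, hK⟩ := exists_nat_gt (max (t / p) 0)
  have hK1 : 1 ≤ K := Nat.cast_pos.1 ((le_max_right _ _).trans_lt hK)
  refine (measure_cylinder_le_measure_hitTime_eq hinv hy hyx hn hK1).trans (measure_mono ?_)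
  intro ω hω
  show t < (hitTime _ ω : ℝ) * p
  rw [show hitTime _ ω = K from hω, ← div_lt_iff₀ hp]
  exact (le_max_left _ _).trans_lt hK

lemma tendsto_const_mul_exp_neg_mul_atTop {r : ℝ} (hr : 0 < r) (K : ℝ) :
    Tendsto (fun t => K * exp (-r * t)) atTop (𝓝 0) := by
  simpa [neg_mul] using
    (tendsto_exp_neg_atTop_nhds_zero.comp (tendsto_id.const_mul_atTop hr)).const_mul K

namespace HasExpHittingApprox

variable {P : Measure (ℤ → A)} {C c ρ₁ ρ₂ : ℝ}

lemma measure_hitTail_le [IsProbabilityMeasure P] (hKey : HasExpHittingApprox P C c ρ₁ ρ₂)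
    (hC : 0 ≤ C) (hc : 0 ≤ c) {n : ℕ} (a : Fin n → A) {t : ℝ} (ht : 0 ≤ t) :
    (P (hitTail P a t)).toReal ≤ (1 + C) * exp (-ρ₁ * t) := by
  rcases ht.eq_or_lt with rfl | ht
  · simpa [← measureReal_def] using measureReal_le_one.trans (by linarith : (1 : ℝ) ≤ 1 + C)
  obtain ⟨ρ, hρ, hkey⟩ := hKey n a
  have hdecay : exp (-ρ * t) ≤ exp (-ρ₁ * t) := exp_le_exp.2 (by nlinarith [hρ.1])
  have herr : exp (-c * n) ≤ 1 := exp_le_one_iff.2 (by nlinarith [n.cast_nonneg (α := ℝ)])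
  calc (P (hitTail P a t)).toReal
      ≤ (1 + C * exp (-c * n)) * exp (-ρ * t) := by linarith [(abs_le.1 (hkey t ht)).2]
    _ ≤ (1 + C) * exp (-ρ₁ * t) := by gcongr; nlinarith

lemma measure_hitTail_pos (hKey : HasExpHittingApprox P C c ρ₁ ρ₂) {n : ℕ}
    (hn : C * exp (-c * n) < 1) (a : Fin n → A) {t : ℝ} (ht : 0 < t) :
    0 < (P (hitTail P a t)).toReal := by
  obtain ⟨ρ, -, hkey⟩ := hKey n a
  nlinarith [(abs_le.1 (hkey t ht)).1, exp_pos (-ρ * t)]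

-- If two symbols `x ≠ y` shared a measurable atom, each event `{T_{xⁿ} = K}` would have outer
-- measure at least `P([xⁿ])`, so the decaying tail of `T_{xⁿ} P([xⁿ])` would force `P([xⁿ]) = 0`,
-- whereas the approximation makes that tail positive for large `n`.
lemma measurableSingletonClass [Finite A] [IsProbabilityMeasure P]
    (hKey : HasExpHittingApprox P C c ρ₁ ρ₂) (hinv : MeasurePreserving shift P P) (hC : 0 ≤ C)
    (hc : 0 < c) (hρ₁ : 0 < ρ₁) : MeasurableSingletonClass A := by
  refine ⟨fun x => ?_⟩
  suffices measurableAtom x = {x} from this ▸ .measurableAtom_of_countable x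
  refine Set.Subset.antisymm (fun y hy => ?_) (by simp)
  by_contra hyx
  obtain ⟨n, hn, hsmall⟩ : ∃ n : ℕ, 0 < n ∧ C * exp (-c * n) < 1 :=
    ((eventually_gt_atTop 0).and ((tendsto_const_mul_exp_neg_mul_atTop hc C).comp
      tendsto_natCast_atTop_atTop |>.eventually (gt_mem_nhds one_pos))).exists
  let a : Fin n → A := fun _ => x
  have hcyl : (P (cylinder a)).toReal ≤ 0 := by
    refine ge_of_tendsto (tendsto_const_mul_exp_neg_mul_atTop hρ₁ (1 + C)) ?_
    filter_upwards [eventually_ge_atTop 0] with t ht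
    exact (ENNReal.toReal_mono (measure_ne_top _ _)
      (measure_cylinder_le_measure_hitTail hinv hy hyx hn t)).trans
      (hKey.measure_hitTail_le hC hc.le a ht)
  have hempty : hitTail P a 1 = ∅ := by
    ext ω
    simp [hitTail, le_antisymm hcyl ENNReal.toReal_nonneg]
  simpa [hempty] using hKey.measure_hitTail_pos hsmall a one_pos

end HasExpHittingApprox

lemma measurable_blockOf (n : ℕ) : Measurable (blockOf (A := A) n) :=
  measurable_pi_lambda _ fun _ => measurable_pi_apply _

lemma sum_measure_cylinder [Fintype A] [MeasurableSingletonClass A] (P : Measure (ℤ → A))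
    [IsProbabilityMeasure P] (n : ℕ) : ∑ a : Fin n → A, P (cylinder a) = 1 := by
  simp_rw [← blockOf_preimage_singleton]
  rw [sum_measure_preimage_singleton _ fun a _ => measurable_blockOf n (measurableSet_singleton a)]
  simp

lemma measure_prod_waitTime_gt_le [Fintype A] [MeasurableSingletonClass A]
    (P : Measure (ℤ → A)) [IsProbabilityMeasure P] {n : ℕ} {t : ℝ} {ε : ℝ≥0∞}
    (h : ∀ a : Fin n → A, P (hitTail P a t) ≤ ε) :
    (P.prod P) {q | (waitTime n q.1 q.2 : ℝ) * (P (cylinder (blockOf n q.1))).toReal > t} ≤ ε :=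
  calc (P.prod P) {q | (waitTime n q.1 q.2 : ℝ) * (P (cylinder (blockOf n q.1))).toReal > t}
      ≤ (P.prod P) (⋃ a : Fin n → A, cylinder a ×ˢ hitTail P a t) :=
        measure_mono fun q hq => Set.mem_iUnion.2 ⟨blockOf n q.1, fun _ => rfl, hq⟩
    _ ≤ ∑ a : Fin n → A, P (cylinder a) * P (hitTail P a t) := by
        simpa only [Measure.prod_prod] using
          measure_iUnion_fintype_le (P.prod P) fun a : Fin n → A => cylinder a ×ˢ hitTail P a t
    _ ≤ ∑ a : Fin n → A, P (cylinder a) * ε := by gcongr with a; exact h a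
    _ = ε := by rw [← Finset.sum_mul, sum_measure_cylinder, one_mul]

lemma summable_exp_neg_mul_log_nat {s : ℝ} (hs : 1 < s) :
    Summable fun n : ℕ => exp (-s * log n) := by
  refine (summable_nat_rpow.2 (by linarith : -s < -1)).congr_atTop ?_
  filter_upwards [eventually_gt_atTop 0] with n hn
  rw [rpow_def_of_pos (by exact_mod_cast hn), mul_comm]

lemma HasExpHittingApprox.ae_eventually_waitTime_mul_le [Fintype A] [MeasurableSingletonClass A]
    {P : Measure (ℤ → A)} [IsProbabilityMeasure P] {C c ρ₁ ρ₂ : ℝ}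
    (hKey : HasExpHittingApprox P C c ρ₁ ρ₂) (hC : 0 ≤ C) (hc : 0 ≤ c) {α : ℝ} (hα : 0 ≤ α)
    (hαρ : 1 < α * ρ₁) :
    ∀ᵐ q ∂P.prod P, ∀ᶠ n : ℕ in atTop,
      (waitTime n q.1 q.2 : ℝ) * (P (cylinder (blockOf n q.1))).toReal ≤ α * log n := by
  have hB : ∀ n : ℕ,
      (P.prod P) {q | (waitTime n q.1 q.2 : ℝ) * (P (cylinder (blockOf n q.1))).toReal > α * log n}
        ≤ ENNReal.ofReal ((1 + C) * exp (-(α * ρ₁) * log n)) := by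
    intro n
    refine measure_prod_waitTime_gt_le P fun a => ?_
    rw [ENNReal.le_ofReal_iff_toReal_le (measure_ne_top _ _) (by positivity),
      show -(α * ρ₁) * log n = -ρ₁ * (α * log n) by ring]
    exact hKey.measure_hitTail_le hC hc a (mul_nonneg hα (log_natCast_nonneg n))
  have hsum := ((summable_exp_neg_mul_log_nat hαρ).mul_left (1 + C))
  filter_upwards [ae_eventually_notMem (ne_top_of_le_ne_top (ENNReal.ofReal_tsum_of_nonneg
    (fun n => by positivity) hsum ▸ ENNReal.ofReal_ne_top) (ENNReal.tsum_le_tsum hB))] with q hq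
  exact hq.mono fun n hn => not_lt.1 hn

end HittingTimes

theorem waiting_time_log_upper_bound_general
    {A : Type*} [Fintype A] [MeasurableSpace A]
    (P : Measure (ℤ → A)) [IsProbabilityMeasure P]
    (hinv : MeasurePreserving shift P P)
    (C c ρ₁ ρ₂ : ℝ) (hC : 0 < C) (hc : 0 < c) (hρ₁ : 0 < ρ₁)
    (hKey : ∀ (n : ℕ) (a : Fin n → A), ∃ ρ ∈ Set.Icc ρ₁ ρ₂, ∀ t : ℝ, 0 < t →
      |(P {ω | (hitTime a ω : ℝ) * (P (cylinder a)).toReal > t}).toReal -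
          Real.exp (-ρ * t)| ≤ C * Real.exp (-c * n) * Real.exp (-ρ * t))
    (α₁ : ℝ) (hα₁ : 1 < α₁ * ρ₁) :
    ∀ᵐ p ∂(P.prod P), ∀ᶠ n : ℕ in atTop,
      Real.log ((waitTime n p.1 p.2 : ℝ) * (P (cylinder (blockOf n p.1))).toReal) ≤
        Real.log (Real.log ((n : ℝ) ^ α₁)) := by
  have hApprox : HasExpHittingApprox P C c ρ₁ ρ₂ := hKey
  have := hApprox.measurableSingletonClass hinv hC.le hc hρ₁
  have hα : 0 < α₁ := pos_of_mul_pos_left (one_pos.trans hα₁) hρ₁.le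
  have hlog : ∀ᶠ n : ℕ in atTop, 1 ≤ α₁ * log n :=
    ((tendsto_log_atTop.comp tendsto_natCast_atTop_atTop).const_mul_atTop hα).eventually_ge_atTop 1
  filter_upwards [hApprox.ae_eventually_waitTime_mul_le hC.le hc.le hα.le hα₁] with q hq
  filter_upwards [hq, hlog, eventually_gt_atTop 0] with n hle hone hn
  rw [log_rpow (Nat.cast_pos.2 hn)]
  rcases (show 0 ≤ (waitTime n q.1 q.2 : ℝ) * (P (cylinder (blockOf n q.1))).toReal by
    positivity).eq_or_lt with h0 | hpos
  · rw [← h0, log_zero]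
    exact log_nonneg hone
  · exact log_le_log hpos hle

/-- under the exponential approximation of rescaled hitting-time laws,
for every `α₁` with `α₁ ρ₁ > 1`, eventually `P×P`-almost surely
`log (W⁺ₙ(ω,ω')·P([ω₁ⁿ])) ≤ log log n^{α₁}`. -/
theorem waiting_time_log_upper_bound
    {A : Type*} [Fintype A] [MeasurableSpace A]
    (P : Measure (ℤ → A)) [IsProbabilityMeasure P]
    (hinv : MeasurePreserving shift P P)
    (C c ρ₁ ρ₂ : ℝ) (hC : 0 < C) (hc : 0 < c) (hρ₁ : 0 < ρ₁) (hρ₂ : 0 < ρ₂)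
    (hρ : ρ₁ ≤ ρ₂)
    (hKey : ∀ (n : ℕ) (a : Fin n → A), ∃ ρ ∈ Set.Icc ρ₁ ρ₂, ∀ t : ℝ, 0 < t →
      |(P {ω | (hitTime a ω : ℝ) * (P (cylinder a)).toReal > t}).toReal -
          Real.exp (-ρ * t)| ≤ C * Real.exp (-c * n) * Real.exp (-ρ * t))
    (α₁ : ℝ) (hα₁ : 1 < α₁ * ρ₁) :
    ∀ᵐ p ∂(P.prod P), ∀ᶠ n : ℕ in atTop,
      Real.log ((waitTime n p.1 p.2 : ℝ) * (P (cylinder (blockOf n p.1))).toReal) ≤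
        Real.log (Real.log ((n : ℝ) ^ α₁)) :=
  waiting_time_log_upper_bound_general P hinv C c ρ₁ ρ₂ hC hc hρ₁ hKey α₁ hα₁
end

section
/- With 𝓔(p) = P_top(−p·f^R + (1+p)·f) the scaled cumulant generating function of the entropy production of a Gibbs process with potential f and time-reversed potential f^R, one has the Gallavotti–Cohen symmetry 𝓔(−1−p) = 𝓔(p) for all p ∈ ℝ. -/
open MeasureTheory Filter Finset

def revBlock {A : Type*} {n : ℕ} (x : Fin n → A) : Fin n → A := fun i => x i.rev

noncomputable def varSeq {A : Type*} (g : (ℤ → A) → ℝ) (n : ℕ) : ℝ :=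
  sSup {d : ℝ | ∃ ω ω' : ℤ → A, (∀ i : ℤ, |i| ≤ (n : ℤ) → ω i = ω' i) ∧ d = |g ω - g ω'|}

/-- Topological pressure of a potential `g` for the shift on `A^ℤ`, defined via
partition functions over `n`-cylinders. -/
noncomputable def pressure {A : Type*} [Fintype A] (g : (ℤ → A) → ℝ) : ℝ :=
  limsup (fun n : ℕ => (1 / (n : ℝ)) * Real.log
    (∑ x : Fin n → A, Real.exp
      (sSup ((fun ω => ∑ j ∈ range n, g (shift^[j] ω)) '' cylinder x)))) atTop

/-- The scaled cumulant generating function of the entropy production,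
`𝓔(p) = P_top(−p f^R + (1+p) f)`. -/
noncomputable def scgf {A : Type*} [Fintype A] (f fR : (ℤ → A) → ℝ) (p : ℝ) : ℝ :=
  pressure (fun ω => -p * fR ω + (1 + p) * f ω)

namespace GC
variable {A : Type*}

noncomputable def Sn (g : (ℤ → A) → ℝ) (n : ℕ) (ω : ℤ → A) : ℝ :=
  ∑ j ∈ range n, g (shift^[j] ω)

noncomputable def W (g : (ℤ → A) → ℝ) (n : ℕ) (x : Fin n → A) : ℝ :=
  sSup ((fun ω => Sn g n ω) '' cylinder x)

noncomputable def Z [Fintype A] (g : (ℤ → A) → ℝ) (n : ℕ) : ℝ :=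
  ∑ x : Fin n → A, Real.exp (W g n x)

lemma cylinder_nonempty [Nonempty A] {n : ℕ} (x : Fin n → A) : (cylinder x).Nonempty := by
  classical
  refine ⟨fun i => if h : 0 ≤ i ∧ i < n then x ⟨i.toNat, by omega⟩ else Classical.arbitrary A, ?_⟩
  intro i
  have h1 : (0:ℤ) ≤ (i : ℤ) ∧ (i : ℤ) < n := by
    constructor
    · exact_mod_cast Nat.zero_le _
    · exact_mod_cast i.is_lt
  simp only [dif_pos h1]
  have hi : (⟨((i:ℤ)).toNat, by omega⟩ : Fin n) = i := by ext; simp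
  rw [hi]

lemma csSup_between {s : Set ℝ} (hne : s.Nonempty) {lo hi : ℝ}
    (h : ∀ y ∈ s, lo ≤ y ∧ y ≤ hi) : lo ≤ sSup s ∧ sSup s ≤ hi := by
  obtain ⟨y, hy⟩ := hne
  have hb : BddAbove s := ⟨hi, fun z hz => (h z hz).2⟩
  exact ⟨(h y hy).1.trans (le_csSup hb hy), csSup_le ⟨y, hy⟩ fun z hz => (h z hz).2⟩

lemma W_between [Nonempty A] {g : (ℤ → A) → ℝ} {n : ℕ} {x : Fin n → A} {lo hi : ℝ}
    (h : ∀ ω ∈ cylinder x, lo ≤ Sn g n ω ∧ Sn g n ω ≤ hi) :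
    lo ≤ W g n x ∧ W g n x ≤ hi := by
  apply csSup_between ((cylinder_nonempty x).image _)
  rintro y ⟨ω, hω, rfl⟩; exact h ω hω

lemma gibbs_abs {K' q S : ℝ} (hK : 0 < K') (h1 : K'⁻¹ ≤ q / Real.exp S)
    (h2 : q / Real.exp S ≤ K') : |S - Real.log q| ≤ Real.log K' := by
  have hE : 0 < Real.exp S := Real.exp_pos S
  have hq : 0 < q := by
    by_contra hc
    push_neg at hc
    have h3 : q / Real.exp S ≤ 0 := div_nonpos_of_nonpos_of_nonneg hc hE.le
    have h4 := inv_pos.2 hK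
    linarith
  have hlog1 : Real.log K'⁻¹ ≤ Real.log (q / Real.exp S) :=
    Real.log_le_log (inv_pos.2 hK) h1
  have hlog2 : Real.log (q / Real.exp S) ≤ Real.log K' :=
    Real.log_le_log (by positivity) h2
  rw [Real.log_div hq.ne' hE.ne', Real.log_exp] at hlog1 hlog2
  rw [Real.log_inv] at hlog1
  rw [abs_le]
  constructor <;> linarith

lemma Sn_combo (a b : ℝ) (u v : (ℤ → A) → ℝ) (n : ℕ) (ω : ℤ → A) :
    Sn (fun ω => a * u ω + b * v ω) n ω = a * Sn u n ω + b * Sn v n ω := by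
  simp [Sn, Finset.sum_add_distrib, Finset.mul_sum]

lemma revBlock_involutive (n : ℕ) : Function.Involutive (revBlock (A := A) (n := n)) :=
  fun x => by funext i; simp [revBlock, Fin.rev_rev]


lemma W_T [Nonempty A] {n : ℕ} {x : Fin n → A} (a b t : ℝ) {u v : (ℤ → A) → ℝ}
    {Lu Lv : ℝ} (hu : ∀ ω ∈ cylinder x, |Sn u n ω - Lu| ≤ t)
    (hv : ∀ ω ∈ cylinder x, |Sn v n ω - Lv| ≤ t) :
    |W (fun ω => a * u ω + b * v ω) n x - (a * Lu + b * Lv)| ≤ (|a| + |b|) * t := by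
  have key : ∀ ω ∈ cylinder x,
      |Sn (fun ω => a * u ω + b * v ω) n ω - (a * Lu + b * Lv)| ≤ (|a| + |b|) * t := by
    intro ω hω
    rw [Sn_combo]
    have h1 := hu ω hω
    have h2 := hv ω hω
    have e : a * Sn u n ω + b * Sn v n ω - (a * Lu + b * Lv)
        = a * (Sn u n ω - Lu) + b * (Sn v n ω - Lv) := by ring
    rw [e]
    calc |a * (Sn u n ω - Lu) + b * (Sn v n ω - Lv)|
        ≤ |a * (Sn u n ω - Lu)| + |b * (Sn v n ω - Lv)| := abs_add_le _ _
      _ = |a| * |Sn u n ω - Lu| + |b| * |Sn v n ω - Lv| := by rw [abs_mul, abs_mul]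
      _ ≤ |a| * t + |b| * t := add_le_add
          (mul_le_mul_of_nonneg_left h1 (abs_nonneg a))
          (mul_le_mul_of_nonneg_left h2 (abs_nonneg b))
      _ = (|a| + |b|) * t := by ring
  have hW := W_between (g := fun ω => a * u ω + b * v ω) (x := x)
    (lo := (a * Lu + b * Lv) - (|a| + |b|) * t) (hi := (a * Lu + b * Lv) + (|a| + |b|) * t)
    (fun ω hω => by
      have h := abs_le.mp (key ω hω)
      exact ⟨by linarith [h.1], by linarith [h.2]⟩)
  rw [abs_le]
  exact ⟨by linarith [hW.1], by linarith [hW.2]⟩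

lemma Z_pos [Fintype A] [Nonempty A] (g : (ℤ → A) → ℝ) (n : ℕ) : 0 < Z g n :=
  Finset.sum_pos (fun x _ => Real.exp_pos _) ⟨Classical.arbitrary _, Finset.mem_univ _⟩

lemma seq_bound [Fintype A] [Nonempty A] [TopologicalSpace A] [DiscreteTopology A]
    (g : (ℤ → A) → ℝ) (hg : Continuous g) :
    ∃ M : ℝ, ∀ n : ℕ, |(1 / (n : ℝ)) * Real.log (Z g n)| ≤ M := by
  obtain ⟨B, hB⟩ := (isCompact_univ (X := ℤ → A)).exists_bound_of_continuousOn hg.continuousOn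
  have hB' : ∀ ω : ℤ → A, |g ω| ≤ B := fun ω => by
    have := hB ω trivial; rwa [Real.norm_eq_abs] at this
  have hB0 : 0 ≤ B := le_trans (abs_nonneg _) (hB' (Classical.arbitrary _))
  set CA : ℝ := (Fintype.card A : ℝ) with hCAdef
  have hCA : 1 ≤ CA := by rw [hCAdef]; exact_mod_cast Fintype.card_pos (α := A)
  have hlCA : 0 ≤ Real.log CA := Real.log_nonneg hCA
  refine ⟨B + Real.log CA, fun n => ?_⟩
  rcases Nat.eq_zero_or_pos n with rfl | hn
  · simp
    positivity
  have hnR : (0 : ℝ) < n := by exact_mod_cast hn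
  have hSn : ∀ ω : ℤ → A, |Sn g n ω| ≤ n * B := by
    intro ω
    calc |Sn g n ω| ≤ ∑ j ∈ range n, |g (shift^[j] ω)| := Finset.abs_sum_le_sum_abs _ _
      _ ≤ ∑ _j ∈ range n, B := Finset.sum_le_sum fun j _ => hB' _
      _ = n * B := by simp [mul_comm]
  have hW : ∀ x : Fin n → A, -(n * B) ≤ W g n x ∧ W g n x ≤ n * B :=
    fun x => W_between fun ω _ => abs_le.mp (hSn ω)
  have hZlo : Real.exp (-(n * B)) ≤ Z g n :=
    calc Real.exp (-(n * B)) ≤ Real.exp (W g n (Classical.arbitrary _)) :=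
          Real.exp_le_exp.2 (hW _).1
      _ ≤ Z g n := Finset.single_le_sum (fun x _ => (Real.exp_pos _).le) (Finset.mem_univ _)
  have hcard : (Fintype.card (Fin n → A) : ℝ) = CA ^ n := by
    rw [hCAdef]
    rw [← Nat.cast_pow]
    congr 1
    simp [Fintype.card_fun]
  have hZhi : Z g n ≤ CA ^ n * Real.exp (n * B) := by
    calc Z g n ≤ ∑ _x : Fin n → A, Real.exp (n * B) :=
          Finset.sum_le_sum fun x _ => Real.exp_le_exp.2 (hW x).2
      _ = (Fintype.card (Fin n → A) : ℝ) * Real.exp (n * B) := by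
          simp [Finset.sum_const, nsmul_eq_mul]
      _ = CA ^ n * Real.exp (n * B) := by rw [hcard]
  have hlog1 : -(n * B) ≤ Real.log (Z g n) := by
    have := Real.log_le_log (Real.exp_pos _) hZlo
    rwa [Real.log_exp] at this
  have hlog2 : Real.log (Z g n) ≤ n * Real.log CA + n * B := by
    have h := Real.log_le_log (Z_pos g n) hZhi
    rwa [Real.log_mul (by positivity) (Real.exp_ne_zero _), Real.log_exp,
      Real.log_pow] at h
  have habs : |Real.log (Z g n)| ≤ n * (B + Real.log CA) := by
    rw [abs_le]
    constructor <;> nlinarith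
  calc |(1 / (n : ℝ)) * Real.log (Z g n)| = (1 / (n : ℝ)) * |Real.log (Z g n)| := by
        rw [abs_mul, abs_of_pos (by positivity : (0:ℝ) < 1 / (n:ℝ))]
    _ ≤ (1 / (n : ℝ)) * (n * (B + Real.log CA)) := by
        apply mul_le_mul_of_nonneg_left habs (by positivity)
    _ = B + Real.log CA := by field_simp

lemma limsup_le_limsup_of_tendsto_sub {u v : ℕ → ℝ} {M : ℝ}
    (hu : ∀ n, |u n| ≤ M) (hv : ∀ n, |v n| ≤ M)
    (h : Tendsto (fun n => u n - v n) atTop (nhds 0)) :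
    limsup u atTop ≤ limsup v atTop := by
  have hub : IsBoundedUnder (· ≤ ·) (atTop : Filter ℕ) v :=
    isBoundedUnder_of ⟨M, fun n : ℕ => (abs_le.mp (hv n)).2⟩
  have hcb : IsCoboundedUnder (· ≤ ·) (atTop : Filter ℕ) u :=
    IsBoundedUnder.isCoboundedUnder_le
      (isBoundedUnder_of ⟨-M, fun n : ℕ => (abs_le.mp (hu n)).1⟩)
  refine le_of_forall_pos_le_add fun ε hε => ?_
  have h1 : ∀ᶠ n in atTop, v n < limsup v atTop + ε / 2 :=
    eventually_lt_of_limsup_lt (by linarith) hub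
  have h2 : ∀ᶠ n in atTop, |u n - v n| < ε / 2 := by
    have h3 := (Metric.tendsto_nhds.mp h) (ε / 2) (by positivity)
    filter_upwards [h3] with n hn
    rwa [Real.dist_eq, sub_zero] at hn
  apply limsup_le_of_le hcb
  filter_upwards [h1, h2] with n hn1 hn2
  have := abs_lt.mp hn2
  linarith

lemma limsup_eq_of_tendsto_sub {u v : ℕ → ℝ} {M : ℝ}
    (hu : ∀ n, |u n| ≤ M) (hv : ∀ n, |v n| ≤ M)
    (h : Tendsto (fun n => u n - v n) atTop (nhds 0)) :
    limsup u atTop = limsup v atTop := by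
  refine le_antisymm (limsup_le_limsup_of_tendsto_sub hu hv h)
    (limsup_le_limsup_of_tendsto_sub hv hu ?_)
  have := h.neg
  simp only [neg_sub, neg_zero] at this
  exact this


lemma pressure_eq [Fintype A] (g : (ℤ → A) → ℝ) :
    pressure g = limsup (fun n : ℕ => (1 / (n : ℝ)) * Real.log (Z g n)) atTop := rfl

lemma logZ_le [Fintype A] [Nonempty A] [MeasurableSpace A]
    (P : Measure (ℤ → A)) (f fR : (ℤ → A) → ℝ) {K' : ℝ} (hK' : 0 < K')
    (hGibbs : ∀ (n : ℕ) (x : Fin n → A), ∀ ω ∈ cylinder x,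
      K'⁻¹ ≤ (P (cylinder x)).toReal / Real.exp (∑ j ∈ range n, f (shift^[j] ω)) ∧
      (P (cylinder x)).toReal / Real.exp (∑ j ∈ range n, f (shift^[j] ω)) ≤ K')
    (hGibbsR : ∀ (n : ℕ) (x : Fin n → A), ∀ ω ∈ cylinder x,
      K'⁻¹ ≤ (P (cylinder (revBlock x))).toReal / Real.exp (∑ j ∈ range n, fR (shift^[j] ω)) ∧
      (P (cylinder (revBlock x))).toReal / Real.exp (∑ j ∈ range n, fR (shift^[j] ω)) ≤ K')
    (a b : ℝ) (n : ℕ) :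
    Real.log (Z (fun ω => a * fR ω + b * f ω) n) ≤
      Real.log (Z (fun ω => b * fR ω + a * f ω) n) + 2 * ((|a| + |b|) * Real.log K') := by
  classical
  set c := (|a| + |b|) * Real.log K' with hc
  have hWT : ∀ (α β : ℝ) (x : Fin n → A),
      |W (fun ω => α * fR ω + β * f ω) n x -
          (α * Real.log (P (cylinder (revBlock x))).toReal
            + β * Real.log (P (cylinder x)).toReal)| ≤ (|α| + |β|) * Real.log K' := by
    intro α β x
    apply W_T
    · intro ω hω
      exact gibbs_abs hK' (hGibbsR n x ω hω).1 (hGibbsR n x ω hω).2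
    · intro ω hω
      exact gibbs_abs hK' (hGibbs n x ω hω).1 (hGibbs n x ω hω).2
  have h1 : Z (fun ω => a * fR ω + b * f ω) n ≤
      Real.exp (2 * c) * Z (fun ω => b * fR ω + a * f ω) n := by
    have step1 : Z (fun ω => a * fR ω + b * f ω) n ≤
        ∑ x : Fin n → A, Real.exp (a * Real.log (P (cylinder (revBlock x))).toReal
          + b * Real.log (P (cylinder x)).toReal + c) := by
      apply Finset.sum_le_sum
      intro x _
      apply Real.exp_le_exp.2
      have h := abs_le.mp (hWT a b x)
      linarith [h.2]
    have step2 : ∑ x : Fin n → A, Real.exp (a * Real.log (P (cylinder (revBlock x))).toReal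
          + b * Real.log (P (cylinder x)).toReal + c)
        = ∑ x : Fin n → A, Real.exp (a * Real.log (P (cylinder x)).toReal
          + b * Real.log (P (cylinder (revBlock x))).toReal + c) := by
      apply Fintype.sum_bijective revBlock (revBlock_involutive n).bijective
      intro x
      rw [(revBlock_involutive n) x]
    have step3 : ∑ x : Fin n → A, Real.exp (a * Real.log (P (cylinder x)).toReal
          + b * Real.log (P (cylinder (revBlock x))).toReal + c)
        ≤ ∑ x : Fin n → A, Real.exp (W (fun ω => b * fR ω + a * f ω) n x + 2 * c) := by
      apply Finset.sum_le_sum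
      intro x _
      apply Real.exp_le_exp.2
      have h := abs_le.mp (hWT b a x)
      have e : (|b| + |a|) * Real.log K' = c := by rw [hc]; ring
      rw [e] at h
      linarith [h.1]
    have step4 : ∑ x : Fin n → A, Real.exp (W (fun ω => b * fR ω + a * f ω) n x + 2 * c)
        = Real.exp (2 * c) * Z (fun ω => b * fR ω + a * f ω) n := by
      rw [Z, Finset.mul_sum]
      exact Finset.sum_congr rfl fun x _ => by rw [Real.exp_add]; ring
    calc Z (fun ω => a * fR ω + b * f ω) n ≤ _ := step1
      _ = _ := step2
      _ ≤ _ := step3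
      _ = _ := step4
  have hZ2 := Z_pos (A := A) (fun ω => b * fR ω + a * f ω) n
  have h2 := Real.log_le_log (Z_pos _ n) h1
  rwa [Real.log_mul (Real.exp_ne_zero _) hZ2.ne', Real.log_exp, add_comm] at h2

end GC

/-- Gallavotti–Cohen symmetry `𝓔(−1−p) = 𝓔(p)` for the scaled cumulant
generating function of the entropy production of a Gibbs process with potential `f`
and time-reversed potential `f^R`. -/
theorem gallavotti_cohen_symmetry
    {A : Type*} [Fintype A] [MeasurableSpace A] [TopologicalSpace A] [DiscreteTopology A]
    (P : Measure (ℤ → A)) [IsProbabilityMeasure P]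
    (hinv : MeasurePreserving shift P P)
    (f fR : (ℤ → A) → ℝ) (hf : Continuous f) (hfR : Continuous fR)
    (hvarf : Summable (varSeq f)) (hvarfR : Summable (varSeq fR))
    (K' : ℝ) (hK' : 0 < K')
    (hGibbs : ∀ (n : ℕ) (x : Fin n → A), ∀ ω ∈ cylinder x,
      K'⁻¹ ≤ (P (cylinder x)).toReal /
          Real.exp (∑ j ∈ range n, f (shift^[j] ω)) ∧
      (P (cylinder x)).toReal /
          Real.exp (∑ j ∈ range n, f (shift^[j] ω)) ≤ K')
    (hGibbsR : ∀ (n : ℕ) (x : Fin n → A), ∀ ω ∈ cylinder x,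
      K'⁻¹ ≤ (P (cylinder (revBlock x))).toReal /
          Real.exp (∑ j ∈ range n, fR (shift^[j] ω)) ∧
      (P (cylinder (revBlock x))).toReal /
          Real.exp (∑ j ∈ range n, fR (shift^[j] ω)) ≤ K') :
    ∀ p : ℝ, scgf f fR (-1 - p) = scgf f fR p := by
  intro p
  classical
  have hne : Nonempty (ℤ → A) := by
    by_contra h
    rw [not_nonempty_iff] at h
    have h1 : (Set.univ : Set (ℤ → A)) = ∅ := Set.univ_eq_empty_iff.mpr h
    have h2 := measure_univ (μ := P)
    rw [h1, measure_empty] at h2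
    exact zero_ne_one h2
  haveI : Nonempty A := ⟨Classical.arbitrary (ℤ → A) 0⟩
  set g1 : (ℤ → A) → ℝ := fun ω => (1 + p) * fR ω + (-p) * f ω with hg1def
  set g2 : (ℤ → A) → ℝ := fun ω => (-p) * fR ω + (1 + p) * f ω with hg2def
  have e1 : (fun ω => -(-1 - p) * fR ω + (1 + (-1 - p)) * f ω) = g1 := by
    funext ω; rw [hg1def]; ring
  have e2 : (fun ω => -p * fR ω + (1 + p) * f ω) = g2 := hg2def.symm
  show pressure (fun ω => -(-1 - p) * fR ω + (1 + (-1 - p)) * f ω)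
      = pressure (fun ω => -p * fR ω + (1 + p) * f ω)
  rw [e1, e2, GC.pressure_eq, GC.pressure_eq]
  have hg1c : Continuous g1 := (continuous_const.mul hfR).add (continuous_const.mul hf)
  have hg2c : Continuous g2 := (continuous_const.mul hfR).add (continuous_const.mul hf)
  obtain ⟨M1, hM1⟩ := GC.seq_bound g1 hg1c
  obtain ⟨M2, hM2⟩ := GC.seq_bound g2 hg2c
  set c := (|1 + p| + |-p|) * Real.log K' with hcdef
  have key : ∀ n : ℕ, |Real.log (GC.Z g1 n) - Real.log (GC.Z g2 n)| ≤ 2 * c := by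
    intro n
    have hA := GC.logZ_le P f fR hK' hGibbs hGibbsR (1 + p) (-p) n
    have hB := GC.logZ_le P f fR hK' hGibbs hGibbsR (-p) (1 + p) n
    rw [← hg1def, ← hg2def] at hA hB
    have e : (|-p| + |1 + p|) * Real.log K' = c := by rw [hcdef]; ring
    rw [e] at hB
    rw [abs_le]
    constructor
    · linarith
    · linarith
  have hdiff : Tendsto (fun n : ℕ => (1 / (n : ℝ)) * Real.log (GC.Z g1 n)
      - (1 / (n : ℝ)) * Real.log (GC.Z g2 n)) atTop (nhds 0) := by
    apply squeeze_zero_norm' (a := fun n : ℕ => 2 * c / n)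
    · filter_upwards [eventually_ge_atTop 1] with n hn
      have hnR : (0 : ℝ) < n := by exact_mod_cast hn
      have e : (1 / (n : ℝ)) * Real.log (GC.Z g1 n) - (1 / (n : ℝ)) * Real.log (GC.Z g2 n)
          = (1 / (n : ℝ)) * (Real.log (GC.Z g1 n) - Real.log (GC.Z g2 n)) := by ring
      rw [Real.norm_eq_abs, e, abs_mul, abs_of_pos (by positivity : (0:ℝ) < 1 / (n:ℝ))]
      calc (1 / (n : ℝ)) * |Real.log (GC.Z g1 n) - Real.log (GC.Z g2 n)|
          ≤ (1 / (n : ℝ)) * (2 * c) := mul_le_mul_of_nonneg_left (key n) (by positivity)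
        _ = 2 * c / n := by ring
    · exact tendsto_const_div_atTop_nhds_zero_nat (2 * c)
  exact GC.limsup_eq_of_tendsto_sub (M := max M1 M2)
    (fun n => (hM1 n).trans (le_max_left _ _))
    (fun n => (hM2 n).trans (le_max_right _ _)) hdiff
end

section
/- Suppose (Wₙ)ₙ are random variables whose scaled cumulant generating function 𝓦(p) = limₙ (1/n) log E[e^{pWₙ}] exists for p in an open interval (−1,1), is differentiable and strictly convex there, and equals +∞ outside [−1,1]. Let c₋ = lim_{p→−1⁺} 𝓦′(p) and c₊ = lim_{p→1⁻} 𝓦′(p), and let I(q) = sup_{p∈(−1,1)}(pq − 𝓦(p)). Then for every open interval J with J ∩ (c₋, c₊) ≠ ∅, limₙ (1/n) log P{Wₙ/n ∈ J} = −inf_{q ∈ J ∩ (c₋,c₊)} I(q). -/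
/-!
Write `Λₙ(p) = n⁻¹ log E[e^{pWₙ}]` and `I` for the Legendre transform of `𝓦` over `(-1, 1)`.
For `q ∈ (c₋, c₊)` the supremum defining `I q` is attained at the unique `p` with `𝓦′ p = q`
(Darboux), so on `(c₋, c₊)` the function `I` is finite, and `1`-Lipschitz because `|p| < 1`.

Lower bound: for `q = 𝓦′ p ∈ J`, split `E[e^{pWₙ}]` according to whether `|Wₙ/n - q| < δ`.
The tails are at most `e^{-tn(q ± δ)} E[e^{(p ± t)Wₙ}]`, exponentially smaller than `E[e^{pWₙ}]`
once `t` is so small that `𝓦 (p ± t)` lies below the lines of slopes `q ± δ` through `(p, 𝓦 p)`.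
So the centre carries half of `E[e^{pWₙ}]`, whence `P{|Wₙ/n - q| < δ} ≥ ½ e^{n(Λₙ p - pq - |p|δ)}`.

Upper bound: Chernoff's inequality `P{Wₙ/n ∈ J} ≤ e^{n(Λₙ p - pq)}` holds whenever `pq ≤ px` on `J`.
Take for `q` the point of the closure of `J ∩ (c₋, c₊)` nearest to `𝓦′ 0` and `𝓦′ p = q`: then `p`
has the right sign, and `pq - 𝓦 p = I q` is at least the infimum of `I` by continuity of `I`.

Both bounds need the exponential moments to be eventually integrable. Otherwise their junk value
`log 0 = 0` would recur and force `𝓦` to vanish on an interval, against strict convexity.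
-/

open Filter MeasureTheory ProbabilityTheory Real Set Topology

section ConvexAnalysis

variable {f : ℝ → ℝ} {S : Set ℝ} {p q : ℝ}

lemma ConvexOn.derivWithin_mul_sub_le (hf : ConvexOn ℝ S f) (hd : DifferentiableWithinAt ℝ f S p)
    (hp : p ∈ S) {r : ℝ} (hr : r ∈ S) : derivWithin f S p * (r - p) ≤ f r - f p := by
  rcases lt_trichotomy r p with hrp | rfl | hpr
  · have h := hf.slope_le_derivWithin hr hp hrp hd
    rw [slope_def_field, div_le_iff₀ (sub_pos.2 hrp)] at h
    linarith
  · simp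
  · have h := hf.derivWithin_le_slope hp hr hpr hd
    rw [slope_def_field, le_div_iff₀ (sub_pos.2 hpr)] at h
    linarith

/-- `sSup` of a set unbounded above is `0`; on the range of `derivWithin f S` the supremum is
attained, see `ConvexOn.legendreTransform_derivWithin`. -/
noncomputable def legendreTransform (f : ℝ → ℝ) (S : Set ℝ) (q : ℝ) : ℝ :=
  sSup ((fun p => p * q - f p) '' S)

lemma ConvexOn.isGreatest_mul_derivWithin_sub (hf : ConvexOn ℝ S f)
    (hd : DifferentiableWithinAt ℝ f S p) (hp : p ∈ S) :
    IsGreatest ((fun r => r * derivWithin f S p - f r) '' S) (p * derivWithin f S p - f p) := by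
  refine ⟨⟨p, hp, rfl⟩, ?_⟩
  rintro _ ⟨r, hr, rfl⟩
  have := hf.derivWithin_mul_sub_le hd hp hr
  dsimp only
  linarith

lemma ConvexOn.legendreTransform_derivWithin (hf : ConvexOn ℝ S f)
    (hd : DifferentiableWithinAt ℝ f S p) (hp : p ∈ S) :
    legendreTransform f S (derivWithin f S p) = p * derivWithin f S p - f p :=
  (hf.isGreatest_mul_derivWithin_sub hd hp).csSup_eq

lemma StrictMonoOn.mem_Ioo_of_tendsto {g : ℝ → ℝ} {l r cl cr : ℝ}
    (hg : StrictMonoOn g (Ioo l r)) (hl : Tendsto g (𝓝[>] l) (𝓝 cl))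
    (hr : Tendsto g (𝓝[<] r) (𝓝 cr)) (hp : p ∈ Ioo l r) : g p ∈ Ioo cl cr := by
  obtain ⟨u, hlu, hup⟩ := exists_between hp.1
  obtain ⟨v, hpv, hvr⟩ := exists_between hp.2
  have hu : u ∈ Ioo l r := ⟨hlu, hup.trans hp.2⟩
  have hv : v ∈ Ioo l r := ⟨hp.1.trans hpv, hvr⟩
  refine ⟨(le_of_tendsto hl ?_).trans_lt (hg hu hp hup),
    (hg hp hv hpv).trans_le (ge_of_tendsto hr ?_)⟩
  · filter_upwards [Ioo_mem_nhdsGT hlu] with y hy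
    exact (hg ⟨hy.1, hy.2.trans hu.2⟩ hu hy.2).le
  · filter_upwards [Ioo_mem_nhdsLT hvr] with y hy
    exact (hg hv ⟨hv.1.trans hy.1, hy.2⟩ hy.1).le

lemma exists_derivWithin_eq_of_tendsto {l r cl cr : ℝ} (hlr : l < r)
    (hd : DifferentiableOn ℝ f (Ioo l r))
    (hl : Tendsto (derivWithin f (Ioo l r)) (𝓝[>] l) (𝓝 cl))
    (hr : Tendsto (derivWithin f (Ioo l r)) (𝓝[<] r) (𝓝 cr)) (hq : q ∈ Ioo cl cr) :
    ∃ p ∈ Ioo l r, derivWithin f (Ioo l r) p = q := by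
  obtain ⟨u, huq, hlu, hur⟩ :=
    ((hl.eventually (gt_mem_nhds hq.1)).and (Ioo_mem_nhdsGT hlr)).exists
  obtain ⟨v, hqv, huv, hvr⟩ :=
    ((hr.eventually (lt_mem_nhds hq.2)).and (Ioo_mem_nhdsLT hur)).exists
  have hsub : Icc u v ⊆ Ioo l r := Icc_subset_Ioo hlu hvr
  obtain ⟨p, hp, hpq⟩ := exists_hasDerivWithinAt_eq_of_gt_of_lt huv.le
    (fun x hx => ((hd x (hsub hx)).hasDerivWithinAt).mono hsub) huq hqv
  exact ⟨p, hsub (Ioo_subset_Icc_self hp), hpq⟩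

lemma continuousOn_legendreTransform {cl cr : ℝ} (hf : ConvexOn ℝ (Ioo (-1) 1) f)
    (hd : DifferentiableOn ℝ f (Ioo (-1) 1))
    (hl : Tendsto (derivWithin f (Ioo (-1) 1)) (𝓝[>] (-1)) (𝓝 cl))
    (hr : Tendsto (derivWithin f (Ioo (-1) 1)) (𝓝[<] 1) (𝓝 cr)) :
    ContinuousOn (legendreTransform f (Ioo (-1) 1)) (Ioo cl cr) := by
  refine (LipschitzOnWith.of_le_add fun q hq q' hq' => ?_).continuousOn
  obtain ⟨p, hp, rfl⟩ := exists_derivWithin_eq_of_tendsto (by norm_num) hd hl hr hq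
  obtain ⟨p', hp', rfl⟩ := exists_derivWithin_eq_of_tendsto (by norm_num) hd hl hr hq'
  have hle := (hf.isGreatest_mul_derivWithin_sub (hd p' hp') hp').2 ⟨p, hp, rfl⟩
  have habs : p * (derivWithin f (Ioo (-1) 1) p - derivWithin f (Ioo (-1) 1) p')
      ≤ dist (derivWithin f (Ioo (-1) 1) p) (derivWithin f (Ioo (-1) 1) p') := by
    rw [Real.dist_eq]
    calc _ ≤ |p| * |derivWithin f (Ioo (-1) 1) p - derivWithin f (Ioo (-1) 1) p'| := by
          rw [← abs_mul]; exact le_abs_self _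
      _ ≤ _ := mul_le_of_le_one_left (abs_nonneg _) (abs_le.2 ⟨hp.1.le, hp.2.le⟩)
  rw [hf.legendreTransform_derivWithin (hd p hp) hp,
    hf.legendreTransform_derivWithin (hd p' hp') hp']
  dsimp only at hle
  linarith

lemma csInf_legendreTransform_image_le {E : Set ℝ} {cl cr : ℝ}
    (hf : ConvexOn ℝ (Ioo (-1) 1) f) (hd : DifferentiableOn ℝ f (Ioo (-1) 1))
    (hl : Tendsto (derivWithin f (Ioo (-1) 1)) (𝓝[>] (-1)) (𝓝 cl))
    (hr : Tendsto (derivWithin f (Ioo (-1) 1)) (𝓝[<] 1) (𝓝 cr))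
    (hE : E ⊆ Ioo cl cr) (hq : q ∈ closure E ∩ Ioo cl cr) :
    sInf (legendreTransform f (Ioo (-1) 1) '' E) ≤ legendreTransform f (Ioo (-1) 1) q := by
  have hbdd : BddBelow (legendreTransform f (Ioo (-1) 1) '' E) := by
    refine ⟨-f 0, ?_⟩
    rintro _ ⟨_, hqE, rfl⟩
    obtain ⟨p, hp, rfl⟩ := exists_derivWithin_eq_of_tendsto (by norm_num) hd hl hr (hE hqE)
    have := (hf.isGreatest_mul_derivWithin_sub (hd p hp) hp).2 ⟨0, by norm_num, rfl⟩
    rw [hf.legendreTransform_derivWithin (hd p hp) hp]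
    dsimp only at this
    linarith
  exact closure_minimal (fun _ hy => csInf_le hbdd hy) isClosed_Ici
    (((continuousOn_legendreTransform hf hd hl hr).continuousAt
      (isOpen_Ioo.mem_nhds hq.2)).continuousWithinAt.mem_closure_image hq.1)

lemma exists_mul_derivWithin_le_and_sInf_legendreTransform_le {a b cl cr : ℝ}
    (hf : StrictConvexOn ℝ (Ioo (-1) 1) f) (hd : DifferentiableOn ℝ f (Ioo (-1) 1))
    (hl : Tendsto (derivWithin f (Ioo (-1) 1)) (𝓝[>] (-1)) (𝓝 cl))
    (hr : Tendsto (derivWithin f (Ioo (-1) 1)) (𝓝[<] 1) (𝓝 cr))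
    (hne : (Ioo a b ∩ Ioo cl cr).Nonempty) :
    ∃ p ∈ Ioo (-1 : ℝ) 1, (∀ x ∈ Ioo a b, p * derivWithin f (Ioo (-1) 1) p ≤ p * x) ∧
      sInf (legendreTransform f (Ioo (-1) 1) '' (Ioo a b ∩ Ioo cl cr)) ≤
        p * derivWithin f (Ioo (-1) 1) p - f p := by
  set D := derivWithin f (Ioo (-1) 1)
  set I := legendreTransform f (Ioo (-1) 1)
  set E := Ioo a b ∩ Ioo cl cr
  have hsurj : ∀ q ∈ Ioo cl cr, ∃ p ∈ Ioo (-1 : ℝ) 1, D p = q := fun q hq =>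
    exists_derivWithin_eq_of_tendsto (by norm_num) hd hl hr hq
  have h0 : (0 : ℝ) ∈ Ioo (-1) 1 := by norm_num
  have hmono : StrictMonoOn D (Ioo (-1) 1) := hf.strictMonoOn_derivWithin hd
  have hD0 : D 0 ∈ Ioo cl cr := hmono.mem_Ioo_of_tendsto hl hr h0
  have htilt : ∀ p ∈ Ioo (-1 : ℝ) 1, D p ∈ closure E → (∀ x ∈ Ioo a b, p * D p ≤ p * x) →
      ∃ p ∈ Ioo (-1 : ℝ) 1, (∀ x ∈ Ioo a b, p * D p ≤ p * x) ∧ sInf (I '' E) ≤ p * D p - f p :=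
    fun p hp hpE hx => ⟨p, hp, hx,
      (csInf_legendreTransform_image_le hf.convexOn hd hl hr inter_subset_right
        ⟨hpE, hmono.mem_Ioo_of_tendsto hl hr hp⟩).trans_eq
      (hf.convexOn.legendreTransform_derivWithin (hd p hp) hp)⟩
  obtain ⟨q, ⟨haq, hqb⟩, hclq, hqcr⟩ := hne
  have hclosure : closure E = Icc (max a cl) (min b cr) := by
    rw [show E = Ioo (max a cl) (min b cr) from Ioo_inter_Ioo, closure_Ioo]
    exact ((max_lt haq hclq).trans (lt_min hqb hqcr)).ne
  rcases le_or_gt (D 0) a with h0a | h0a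
  · obtain ⟨p, hp, hpa⟩ := hsurj a ⟨hD0.1.trans_le h0a, haq.trans hqcr⟩
    have hp0 : 0 ≤ p := (hmono.le_iff_le h0 hp).1 (h0a.trans hpa.ge)
    refine htilt p hp ?_ fun x hx => ?_
    · rw [hpa, hclosure]
      exact ⟨max_le le_rfl (hD0.1.le.trans h0a), le_min (haq.trans hqb).le (haq.trans hqcr).le⟩
    · rw [hpa]
      exact mul_le_mul_of_nonneg_left hx.1.le hp0
  rcases le_or_gt b (D 0) with hb0 | hb0
  · obtain ⟨p, hp, hpb⟩ := hsurj b ⟨hclq.trans hqb, hb0.trans_lt hD0.2⟩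
    have hp0 : p ≤ 0 := (hmono.le_iff_le hp h0).1 (hpb.le.trans hb0)
    refine htilt p hp ?_ fun x hx => ?_
    · rw [hpb, hclosure]
      exact ⟨max_le (haq.trans hqb).le (hclq.trans hqb).le, le_min le_rfl (hb0.trans hD0.2.le)⟩
    · rw [hpb]
      exact mul_le_mul_of_nonpos_left hx.2.le hp0
  · exact htilt 0 h0 (subset_closure ⟨⟨h0a, hb0⟩, hD0⟩) (by simp)

lemma HasDerivAt.exists_pos_sub_lt_mul {f' δ : ℝ} (hd : HasDerivAt f f' p) (hS : S ∈ 𝓝 p)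
    (hδ : 0 < δ) :
    ∃ t > 0, p + t ∈ S ∧ p - t ∈ S ∧
      f (p + t) - f p < t * (f' + δ) ∧ f (p - t) - f p < -(t * (f' - δ)) := by
  have hneg : Tendsto Neg.neg (𝓝[>] (0 : ℝ)) (𝓝[<] 0) := by
    simpa using tendsto_neg_nhdsGT_neg (a := (0 : ℝ))
  have hR := hd.tendsto_slope_zero_right.eventually (gt_mem_nhds (lt_add_of_pos_right f' hδ))
  have hL := (hd.tendsto_slope_zero_left.comp hneg).eventually
    (lt_mem_nhds (sub_lt_self f' hδ))
  have hmem : ∀ᶠ t in 𝓝 (0 : ℝ), p + t ∈ S ∧ p - t ∈ S := by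
    have h1 : Tendsto (fun t => p + t) (𝓝 0) (𝓝 p) := by
      simpa using (continuous_const_add p).tendsto 0
    have h2 : Tendsto (fun t => p - t) (𝓝 0) (𝓝 p) := by
      simpa using ((continuous_sub_left p).tendsto 0)
    exact (h1.eventually_mem hS).and (h2.eventually_mem hS)
  obtain ⟨t, ht, hRt, hLt, hpt, hmt⟩ :=
    ((eventually_mem_nhdsWithin (a := (0 : ℝ)) (s := Ioi 0)).and
      (hR.and (hL.and (nhdsWithin_le_nhds hmem)))).exists
  simp only [Function.comp_apply, smul_eq_mul, ← sub_eq_add_neg, inv_neg, neg_mul] at hRt hLt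
  refine ⟨t, ht, hpt, hmt, ?_, ?_⟩
  · rwa [inv_mul_lt_iff₀ ht] at hRt
  · rw [lt_neg, inv_mul_lt_iff₀ ht] at hLt
    linarith

end ConvexAnalysis

lemma eventually_exp_nat_mul_lt {a : ℕ → ℝ} {α ε : ℝ} (ha : Tendsto a atTop (𝓝 α))
    (hα : α < 0) (hε : 0 < ε) : ∀ᶠ n : ℕ in atTop, exp (n * a n) < ε :=
  (tendsto_exp_atBot.comp (tendsto_natCast_atTop_atTop.atTop_mul_neg hα ha)).eventually
    (gt_mem_nhds hε)

lemma tendsto_one_div_mul_log_of_exp_bounds {x : ℕ → ℝ} {ℓ : ℝ}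
    (hlow : ∀ L < ℓ, ∀ᶠ n : ℕ in atTop, exp (n * L) ≤ x n)
    (hup : ∀ L > ℓ, ∀ᶠ n : ℕ in atTop, x n ≤ exp (n * L)) :
    Tendsto (fun n : ℕ => (1 / (n : ℝ)) * log (x n)) atTop (𝓝 ℓ) := by
  refine tendsto_order.2 ⟨fun L hL => ?_, fun L hL => ?_⟩
  · obtain ⟨L', hLL', hL'ℓ⟩ := exists_between hL
    filter_upwards [hlow L' hL'ℓ, eventually_gt_atTop 0] with n hn hn0
    have hn' : (0 : ℝ) < n := Nat.cast_pos.2 hn0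
    rw [one_div_mul_eq_div, lt_div_iff₀ hn', lt_log_iff_exp_lt ((exp_pos _).trans_le hn)]
    exact (exp_lt_exp.2 (by nlinarith)).trans_le hn
  · obtain ⟨L', hℓL', hL'L⟩ := exists_between hL
    filter_upwards [hup L' hℓL', hlow (ℓ - 1) (by linarith), eventually_gt_atTop 0]
      with n hn hpos hn0
    have hn' : (0 : ℝ) < n := Nat.cast_pos.2 hn0
    rw [one_div_mul_eq_div, div_lt_iff₀ hn', log_lt_iff_lt_exp ((exp_pos _).trans_le hpos)]
    exact hn.trans_lt (exp_lt_exp.2 (by nlinarith))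

lemma exp_mul_le_indicator_add (p t c δ w : ℝ) (ht : 0 ≤ t) :
    exp (p * w) ≤ (Ioo (c - δ) (c + δ)).indicator (fun _ => exp (p * c + |p| * δ)) w
      + exp (-(t * (c + δ))) * exp ((p + t) * w) + exp (t * (c - δ)) * exp ((p - t) * w) := by
  have h1 : 0 ≤ exp (-(t * (c + δ))) * exp ((p + t) * w) := by positivity
  have h2 : 0 ≤ exp (t * (c - δ)) * exp ((p - t) * w) := by positivity
  by_cases hw : w ∈ Ioo (c - δ) (c + δ)
  · have hwc : p * w ≤ p * c + |p| * δ := by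
      have hdist : |w - c| ≤ δ := (abs_sub_lt_iff.2 ⟨by linarith [hw.2], by linarith [hw.1]⟩).le
      have := (le_abs_self (p * (w - c))).trans_eq (abs_mul p (w - c))
      nlinarith [mul_le_mul_of_nonneg_left hdist (abs_nonneg p)]
    rw [indicator_of_mem hw]
    linarith [exp_le_exp.2 hwc]
  · rw [indicator_of_notMem hw, zero_add]
    rcases not_and_or.1 hw with hlo | hhi
    · have : p * w ≤ t * (c - δ) + (p - t) * w := by
        nlinarith [mul_le_mul_of_nonneg_left (not_lt.1 hlo) ht]
      have := exp_le_exp.2 this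
      rw [exp_add] at this
      linarith
    · have : p * w ≤ -(t * (c + δ)) + (p + t) * w := by
        nlinarith [mul_le_mul_of_nonneg_left (not_lt.1 hhi) ht]
      have := exp_le_exp.2 this
      rw [exp_add] at this
      linarith

section LargeDeviations

variable {Ω : Type*} [MeasurableSpace Ω] {μ : Measure Ω}

lemma mgf_le_measureReal_mul_add [IsFiniteMeasure μ] {X : Ω → ℝ} (hX : Measurable X)
    {p t : ℝ} (c δ : ℝ) (ht : 0 ≤ t) (hpt : Integrable (fun ω => exp ((p + t) * X ω)) μ)
    (hmt : Integrable (fun ω => exp ((p - t) * X ω)) μ) :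
    mgf X μ p ≤ exp (p * c + |p| * δ) * μ.real {ω | X ω ∈ Ioo (c - δ) (c + δ)}
      + exp (-(t * (c + δ))) * mgf X μ (p + t) + exp (t * (c - δ)) * mgf X μ (p - t) := by
  set A := {ω | X ω ∈ Ioo (c - δ) (c + δ)}
  set C := exp (p * c + |p| * δ)
  have hA : MeasurableSet A := hX measurableSet_Ioo
  have hind : Integrable (A.indicator fun _ => C) μ := (integrable_const _).indicator hA
  have hupper : Integrable (fun ω => A.indicator (fun _ => C) ω
      + exp (-(t * (c + δ))) * exp ((p + t) * X ω)) μ := hind.add (hpt.const_mul _)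
  calc mgf X μ p
      ≤ ∫ ω, A.indicator (fun _ => C) ω + exp (-(t * (c + δ))) * exp ((p + t) * X ω)
          + exp (t * (c - δ)) * exp ((p - t) * X ω) ∂μ :=
        integral_mono_of_nonneg (ae_of_all _ fun ω => (exp_pos _).le)
          (hupper.add (hmt.const_mul _)) (ae_of_all _ fun ω => by
            have h := exp_mul_le_indicator_add p t c δ (X ω) ht
            rw [← indicator_comp_right] at h
            exact h)
    _ = _ := by
        rw [integral_add hupper (hmt.const_mul _), integral_add hind (hpt.const_mul _),
          integral_const_mul, integral_const_mul, integral_indicator_const _ hA, smul_eq_mul,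
          mul_comm (μ.real A)]
        rfl

lemma exp_nat_mul_one_div_mul_cgf [NeZero μ] {X : Ω → ℝ} {t : ℝ} {n : ℕ} (hn : n ≠ 0)
    (h : Integrable (fun ω => exp (t * X ω)) μ) :
    exp (n * ((1 / n) * cgf X μ t)) = mgf X μ t := by
  rw [← mul_assoc, mul_one_div_cancel (Nat.cast_ne_zero.2 hn), one_mul, exp_cgf h]

lemma one_le_exp_mul_measureReal_div_mem_Ioo_add [IsFiniteMeasure μ] [NeZero μ] {X : Ω → ℝ}
    (hX : Measurable X) {n : ℕ} (hn : n ≠ 0) {p t q δ : ℝ} (ht : 0 ≤ t)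
    (hIp : Integrable (fun ω => exp (p * X ω)) μ)
    (hIt : Integrable (fun ω => exp ((p + t) * X ω)) μ)
    (hIs : Integrable (fun ω => exp ((p - t) * X ω)) μ) :
    1 ≤ exp (n * (p * q + |p| * δ - (1 / n) * cgf X μ p)) *
          μ.real {ω | X ω / n ∈ Ioo (q - δ) (q + δ)}
      + exp (n * ((1 / n) * cgf X μ (p + t) - (1 / n) * cgf X μ p - t * (q + δ)))
      + exp (n * ((1 / n) * cgf X μ (p - t) - (1 / n) * cgf X μ p + t * (q - δ))) := by
  have hn' : (0 : ℝ) < n := Nat.cast_pos.2 (Nat.pos_of_ne_zero hn)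
  have hset : {ω | X ω / n ∈ Ioo (q - δ) (q + δ)} =
      {ω | X ω ∈ Ioo (n * q - n * δ) (n * q + n * δ)} := by
    ext ω
    simp only [mem_ofPred_eq, mem_Ioo, lt_div_iff₀ hn', div_lt_iff₀ hn']
    constructor <;> rintro ⟨h1, h2⟩ <;> constructor <;> linarith
  have key := mgf_le_measureReal_mul_add (μ := μ) hX (n * q) (n * δ) ht hIt hIs
  rw [← exp_nat_mul_one_div_mul_cgf hn hIp, ← exp_nat_mul_one_div_mul_cgf hn hIt,
    ← exp_nat_mul_one_div_mul_cgf hn hIs, ← hset] at key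
  set Λ : ℝ → ℝ := fun r => (1 / (n : ℝ)) * cgf X μ r
  set E := exp (n * Λ p)
  have hE : exp (p * (n * q) + |p| * (n * δ)) = exp (n * (p * q + |p| * δ - Λ p)) * E := by
    rw [← exp_add]; congr 1; ring
  have hEt : exp (-(t * (n * q + n * δ))) * exp (n * Λ (p + t))
      = exp (n * (Λ (p + t) - Λ p - t * (q + δ))) * E := by
    rw [← exp_add, ← exp_add]; congr 1; ring
  have hEs : exp (t * (n * q - n * δ)) * exp (n * Λ (p - t))
      = exp (n * (Λ (p - t) - Λ p + t * (q - δ))) * E := by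
    rw [← exp_add, ← exp_add]; congr 1; ring
  change E ≤ exp (p * (n * q) + |p| * (n * δ)) * μ.real {ω | X ω / n ∈ Ioo (q - δ) (q + δ)}
      + exp (-(t * (n * q + n * δ))) * exp (n * Λ (p + t))
      + exp (t * (n * q - n * δ)) * exp (n * Λ (p - t)) at key
  rw [hE, hEt, hEs] at key
  refine le_of_mul_le_mul_left ?_ (exp_pos (n * Λ p))
  linear_combination key

variable {W : ℕ → Ω → ℝ} {f : ℝ → ℝ}

lemma eventually_integrable_exp_mul_of_strictConvexOn [IsFiniteMeasure μ] {a b p : ℝ}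
    (hlim : ∀ q ∈ Ioo a b,
      Tendsto (fun n : ℕ => (1 / (n : ℝ)) * cgf (W n) μ q) atTop (𝓝 (f q)))
    (hf : StrictConvexOn ℝ (Ioo a b) f) (hp : p ∈ Ioo a b) :
    ∀ᶠ n in atTop, Integrable (fun ω => exp (p * W n ω)) μ := by
  by_contra h
  rw [not_eventually] at h
  -- a non-integrable `exp (q * W n)` has junk integral `0`, so its `cgf` is `log 0 = 0`
  have hzero : ∀ q ∈ Ioo a b, 0 ≤ p ∧ p ≤ q ∨ q ≤ p ∧ p ≤ 0 → f q = 0 := by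
    intro q hq hpq
    refine tendsto_nhds_unique_of_frequently_eq (hlim q hq) tendsto_const_nhds
      (h.mono fun n hn => ?_)
    have h0 : Integrable (fun ω => exp (0 * W n ω)) μ := by simp
    have hn' : ¬Integrable (fun ω => exp (q * W n ω)) μ := fun hi => hn <| by
      rcases hpq with ⟨h0p, hpq⟩ | ⟨hpq, hp0⟩
      · exact integrable_exp_mul_of_le_of_le h0 hi h0p hpq
      · exact integrable_exp_mul_of_le_of_le hi h0 hpq hp0
    simp [cgf, mgf_undef hn']
  obtain ⟨u, v, huv, hsub, hfuv⟩ :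
      ∃ u v, u < v ∧ Ioo u v ⊆ Ioo a b ∧ ∀ x ∈ Ioo u v, f x = 0 := by
    rcases le_total 0 p with h0 | h0
    · exact ⟨p, b, hp.2, Ioo_subset_Ioo_left hp.1.le,
        fun x hx => hzero x ⟨hp.1.trans hx.1, hx.2⟩ (Or.inl ⟨h0, hx.1.le⟩)⟩
    · exact ⟨a, p, hp.1, Ioo_subset_Ioo_right hp.2.le,
        fun x hx => hzero x ⟨hx.1, hx.2.trans hp.2⟩ (Or.inr ⟨hx.2.le, h0⟩)⟩
  have hmin : ∀ x ∈ Ioo u v, IsMinOn f (Ioo u v) x := fun x hx =>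
    isMinOn_iff.2 fun y hy => (hfuv x hx).trans_le (hfuv y hy).ge
  have hx : (2 * u + v) / 3 ∈ Ioo u v := ⟨by linarith, by linarith⟩
  have hy : (u + 2 * v) / 3 ∈ Ioo u v := ⟨by linarith, by linarith⟩
  have := (hf.subset hsub (convex_Ioo u v)).eq_of_isMinOn (hmin _ hx) (hmin _ hy) hx hy
  linarith

lemma eventually_exp_mul_le_measureReal_div_mem_Ioo [IsFiniteMeasure μ] [NeZero μ]
    {S : Set ℝ} {p q δ L : ℝ} (hmeas : ∀ n, Measurable (W n))
    (hint : ∀ r ∈ S, ∀ᶠ n in atTop, Integrable (fun ω => exp (r * W n ω)) μ)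
    (hlim : ∀ r ∈ S, Tendsto (fun n : ℕ => (1 / (n : ℝ)) * cgf (W n) μ r) atTop (𝓝 (f r)))
    (hS : S ∈ 𝓝 p) (hd : HasDerivAt f q p) (hδ : 0 < δ) (hL : L < f p - p * q - |p| * δ) :
    ∀ᶠ n : ℕ in atTop, exp (n * L) ≤ μ.real {ω | W n ω / n ∈ Ioo (q - δ) (q + δ)} := by
  obtain ⟨t, ht, hpt, hmt, hslope_right, hslope_left⟩ := hd.exists_pos_sub_lt_mul hS hδ
  have hp : p ∈ S := mem_of_mem_nhds hS
  have hright := eventually_exp_nat_mul_lt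
    (((hlim _ hpt).sub (hlim p hp)).sub_const (t * (q + δ))) (by linarith)
    (by norm_num : (0 : ℝ) < 1 / 4)
  have hleft := eventually_exp_nat_mul_lt
    (((hlim _ hmt).sub (hlim p hp)).add_const (t * (q - δ))) (by linarith)
    (by norm_num : (0 : ℝ) < 1 / 4)
  have hcenter := eventually_exp_nat_mul_lt
    (((hlim p hp).const_sub (p * q + |p| * δ)).const_add L) (by linarith)
    (by norm_num : (0 : ℝ) < 1 / 2)
  filter_upwards [hint p hp, hint _ hpt, hint _ hmt, hright, hleft, hcenter,
    eventually_ne_atTop 0] with n hIp hIt hIs hright hleft hcenter hn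
  have hsplit := one_le_exp_mul_measureReal_div_mem_Ioo_add (q := q) (δ := δ) (hmeas n) hn ht.le
    hIp hIt hIs
  set g := exp (n * (p * q + |p| * δ - (1 / n) * cgf (W n) μ p))
  have hLg : exp (n * L) * g < 1 / 2 := by
    rwa [← exp_add, ← mul_add]
  refine (lt_of_mul_lt_mul_right (a := g) ?_ (exp_pos _).le).le
  linarith

lemma eventually_exp_mul_le_measureReal_div_mem [IsFiniteMeasure μ] [NeZero μ]
    {S J : Set ℝ} {p q L : ℝ} (hmeas : ∀ n, Measurable (W n))
    (hint : ∀ r ∈ S, ∀ᶠ n in atTop, Integrable (fun ω => exp (r * W n ω)) μ)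
    (hlim : ∀ r ∈ S, Tendsto (fun n : ℕ => (1 / (n : ℝ)) * cgf (W n) μ r) atTop (𝓝 (f r)))
    (hS : S ∈ 𝓝 p) (hd : HasDerivAt f q p) (hJ : J ∈ 𝓝 q) (hL : L < f p - p * q) :
    ∀ᶠ n : ℕ in atTop, exp (n * L) ≤ μ.real {ω | W n ω / n ∈ J} := by
  obtain ⟨ε, hε, hball⟩ := Metric.mem_nhds_iff.1 hJ
  have hsmall : ∀ᶠ δ in 𝓝 (0 : ℝ), δ < ε ∧ L < f p - p * q - |p| * δ := by
    refine (gt_mem_nhds hε).and ?_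
    have : Tendsto (fun δ => f p - p * q - |p| * δ) (𝓝 0) (𝓝 (f p - p * q)) := by
      simpa using (tendsto_const_nhds.sub ((continuous_const_mul |p|).tendsto 0))
    exact this.eventually (lt_mem_nhds hL)
  obtain ⟨δ, hδ, hδε, hδL⟩ :=
    ((eventually_mem_nhdsWithin (a := (0 : ℝ)) (s := Ioi 0)).and
      (nhdsWithin_le_nhds hsmall)).exists
  have hsub : Ioo (q - δ) (q + δ) ⊆ J := by
    rw [← Real.ball_eq_Ioo]
    exact (Metric.ball_subset_ball hδε.le).trans hball
  filter_upwards [eventually_exp_mul_le_measureReal_div_mem_Ioo hmeas hint hlim hS hd hδ hδL]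
    with n hn
  exact hn.trans (measureReal_mono fun ω hω => hsub hω)

lemma eventually_measureReal_div_mem_le_exp_mul [IsFiniteMeasure μ] [NeZero μ]
    {J : Set ℝ} {p q w L : ℝ}
    (hint : ∀ᶠ n in atTop, Integrable (fun ω => exp (p * W n ω)) μ)
    (hlim : Tendsto (fun n : ℕ => (1 / (n : ℝ)) * cgf (W n) μ p) atTop (𝓝 w))
    (hJ : ∀ x ∈ J, p * q ≤ p * x) (hL : w - p * q < L) :
    ∀ᶠ n : ℕ in atTop, μ.real {ω | W n ω / n ∈ J} ≤ exp (n * L) := by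
  filter_upwards [hint, hlim.eventually (gt_mem_nhds (show w < L + p * q by linarith)),
    eventually_ne_atTop 0] with n hI hΛ hn
  have hn' : (0 : ℝ) < n := Nat.cast_pos.2 (Nat.pos_of_ne_zero hn)
  have hsub : {ω | W n ω / n ∈ J} ⊆ {ω | n * (p * q) ≤ p * W n ω} := fun ω hω => by
    have := mul_le_mul_of_nonneg_left (hJ _ hω) hn'.le
    rwa [mul_div_assoc', mul_div_cancel₀ _ hn'.ne'] at this
  calc μ.real {ω | W n ω / n ∈ J}
      ≤ exp (-1 * (n * (p * q))) * mgf (fun ω => p * W n ω) μ 1 :=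
        (measureReal_mono hsub).trans
          (measure_ge_le_exp_mul_mgf _ zero_le_one (by simpa only [one_mul] using hI))
    _ = exp (n * ((1 / n) * cgf (W n) μ p - p * q)) := by
        rw [show mgf (fun ω => p * W n ω) μ 1 = mgf (W n) μ p by simp only [mgf, one_mul],
          ← exp_nat_mul_one_div_mul_cgf hn hI, ← exp_add]
        congr 1
        ring
    _ ≤ exp (n * L) := exp_le_exp.2 (mul_le_mul_of_nonneg_left (by linarith) hn'.le)

end LargeDeviations

theorem gartner_ellis_local_general
    {Ω : Type*} [MeasurableSpace Ω] (μ : Measure Ω) [IsProbabilityMeasure μ]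
    (W : ℕ → Ω → ℝ) (hmeas : ∀ n, Measurable (W n))
    (𝓦 : ℝ → ℝ)
    (hlim : ∀ p ∈ Set.Ioo (-1 : ℝ) 1,
      Tendsto (fun n : ℕ => (1 / (n : ℝ)) *
        Real.log (∫ ω, Real.exp (p * W n ω) ∂μ)) atTop (nhds (𝓦 p)))
    (hdiff : DifferentiableOn ℝ 𝓦 (Set.Ioo (-1) 1))
    (hconv : StrictConvexOn ℝ (Set.Ioo (-1) 1) 𝓦)
    (cm cp : ℝ)
    (hcm : Tendsto (derivWithin 𝓦 (Set.Ioo (-1 : ℝ) 1))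
      (nhdsWithin (-1) (Set.Ioi (-1))) (nhds cm))
    (hcp : Tendsto (derivWithin 𝓦 (Set.Ioo (-1 : ℝ) 1))
      (nhdsWithin 1 (Set.Iio 1)) (nhds cp)) :
    ∀ a b : ℝ, (Set.Ioo a b ∩ Set.Ioo cm cp).Nonempty →
      Tendsto (fun n : ℕ => (1 / (n : ℝ)) *
          Real.log ((μ {ω | W n ω / n ∈ Set.Ioo a b}).toReal)) atTop
        (nhds (-sInf ((fun q => sSup ((fun p => p * q - 𝓦 p) '' Set.Ioo (-1 : ℝ) 1)) ''
          (Set.Ioo a b ∩ Set.Ioo cm cp)))) := by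
  intro a b hne
  show Tendsto _ atTop (𝓝 (-sInf (legendreTransform 𝓦 (Ioo (-1) 1) '' (Ioo a b ∩ Ioo cm cp))))
  have hint : ∀ p ∈ Ioo (-1 : ℝ) 1, ∀ᶠ n in atTop, Integrable (fun ω => exp (p * W n ω)) μ :=
    fun p hp => eventually_integrable_exp_mul_of_strictConvexOn hlim hconv hp
  refine tendsto_one_div_mul_log_of_exp_bounds (fun L hL => ?_) (fun L hL => ?_)
  · obtain ⟨_, ⟨q, hq, rfl⟩, hqL⟩ := exists_lt_of_csInf_lt (hne.image _) (lt_neg.1 hL)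
    obtain ⟨p, hp, rfl⟩ := exists_derivWithin_eq_of_tendsto (by norm_num) hdiff hcm hcp hq.2
    rw [hconv.convexOn.legendreTransform_derivWithin (hdiff p hp) hp] at hqL
    exact eventually_exp_mul_le_measureReal_div_mem hmeas hint hlim (isOpen_Ioo.mem_nhds hp)
      ((hdiff p hp).hasDerivWithinAt.hasDerivAt (isOpen_Ioo.mem_nhds hp))
      (isOpen_Ioo.mem_nhds hq.1) (by linarith)
  · obtain ⟨p, hp, hJ, hle⟩ :=
      exists_mul_derivWithin_le_and_sInf_legendreTransform_le hconv hdiff hcm hcp hne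
    exact eventually_measureReal_div_mem_le_exp_mul (hint p hp) (hlim p hp) hJ (by linarith)

/-- local Gärtner–Ellis large deviation principle. If the scaled cumulant
generating function `𝓦(p) = limₙ (1/n) log E[e^{pWₙ}]` exists on `(−1,1)`, is
differentiable and strictly convex there, and is `+∞` outside `[−1,1]`, and if
`c₋, c₊` are the one-sided limits of `𝓦′` at `−1, 1`, then for every open interval
`J = (a,b)` meeting `(c₋,c₊)`,
`limₙ (1/n) log P{Wₙ/n ∈ J} = −inf_{q ∈ J ∩ (c₋,c₊)} I(q)`, where
`I(q) = sup_{p ∈ (−1,1)} (pq − 𝓦(p))`. -/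
theorem gartner_ellis_local
    {Ω : Type*} [MeasurableSpace Ω] (μ : Measure Ω) [IsProbabilityMeasure μ]
    (W : ℕ → Ω → ℝ) (hmeas : ∀ n, Measurable (W n))
    (𝓦 : ℝ → ℝ)
    (hlim : ∀ p ∈ Set.Ioo (-1 : ℝ) 1,
      Tendsto (fun n : ℕ => (1 / (n : ℝ)) *
        Real.log (∫ ω, Real.exp (p * W n ω) ∂μ)) atTop (nhds (𝓦 p)))
    (hinfty : ∀ p : ℝ, 1 < |p| →
      Tendsto (fun n : ℕ => (1 / (n : ℝ)) *
        Real.log (∫ ω, Real.exp (p * W n ω) ∂μ)) atTop atTop)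
    (hdiff : DifferentiableOn ℝ 𝓦 (Set.Ioo (-1) 1))
    (hconv : StrictConvexOn ℝ (Set.Ioo (-1) 1) 𝓦)
    (cm cp : ℝ)
    (hcm : Tendsto (derivWithin 𝓦 (Set.Ioo (-1 : ℝ) 1))
      (nhdsWithin (-1) (Set.Ioi (-1))) (nhds cm))
    (hcp : Tendsto (derivWithin 𝓦 (Set.Ioo (-1 : ℝ) 1))
      (nhdsWithin 1 (Set.Iio 1)) (nhds cp)) :
    ∀ a b : ℝ, (Set.Ioo a b ∩ Set.Ioo cm cp).Nonempty →
      Tendsto (fun n : ℕ => (1 / (n : ℝ)) *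
          Real.log ((μ {ω | W n ω / n ∈ Set.Ioo a b}).toReal)) atTop
        (nhds (-sInf ((fun q => sSup ((fun p => p * q - 𝓦 p) '' Set.Ioo (-1 : ℝ) 1)) ''
          (Set.Ioo a b ∩ Set.Ioo cm cp)))) :=
  gartner_ellis_local_general μ W hmeas 𝓦 hlim hdiff hconv cm cp hcm hcp
end
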